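/- For every real z and every x, the Stein solution satisfies 0 < f_z(x) ≤ √(2π)/4, where f_z(x) = √(2π) e^{x²/2} Φ(x) (1 - Φ(z)) for x ≤ z and f_z(x) = √(2π) e^{x²/2} (1 - Φ(x)) Φ(z) for x > z. -/

import Mathlib

open MeasureTheory Real

noncomputable def stdPhi (x : ℝ) : ℝ :=
  (Real.sqrt (2 * Real.pi))⁻¹ * ∫ u in Set.Iic x, Real.exp (-u ^ 2 / 2)

noncomputable def steinF (z x : ℝ) : ℝ :=
  if x ≤ z then Real.sqrt (2 * Real.pi) * Real.exp (x ^ 2 / 2) * stdPhi x * (1 - stdPhi z)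
  else Real.sqrt (2 * Real.pi) * Real.exp (x ^ 2 / 2) * (1 - stdPhi x) * stdPhi z

/-!
Both branches of `f_z(x)` are at most `√(2π) e^{x²/2} Φ(x) (1 - Φ(x))` by monotonicity of `Φ`,
so everything rests on `Φ(x) (1 - Φ(x)) ≤ e^{-x²/2} / 4`. By the symmetry `Φ(-x) = 1 - Φ(x)` it
suffices to take `x ≥ 0`. The gap `W = e^{-x²/2} / 4 - Φ (1 - Φ)` vanishes at `0` and at `∞`, and
`W' = e^{-x²/2} U` with `U = (2Φ - 1) / √(2π) - x / 4`. Since `U(0) = 0` and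
`U' = e^{-x²/2} / π - 1 / 4` decreases on `[0, ∞)`, `U` is concave there: first nonnegative, then
negative. So `W` first rises from `0` and then falls to `0`, and is nonnegative throughout.
-/

open Set Filter Topology

/-- By the minimum principle for the concave `U`, either `U ≥ 0` on `[0, x]`, where `W` increases
from `W 0 = 0`, or `U < 0` on `[x, ∞)`, where `W` decreases to its limit `0`. -/
theorem nonneg_of_hasDerivAt_mul_of_concaveOn {W U g : ℝ → ℝ} (hU : ConcaveOn ℝ (Ici 0) U)
    (hU0 : U 0 = 0) (hW : ∀ t, HasDerivAt W (g t * U t) t) (hg : ∀ t, 0 ≤ g t) (hW0 : W 0 = 0)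
    (hW_lim : Tendsto W atTop (𝓝 0)) {x : ℝ} (hx : 0 ≤ x) : 0 ≤ W x := by
  have hW_cont : Continuous W := continuous_iff_continuousAt.2 fun t => (hW t).continuousAt
  have hW_within : ∀ s t, HasDerivWithinAt W (g t * U t) s t := fun _ t => (hW t).hasDerivWithinAt
  rcases le_or_gt 0 (U x) with hUx | hUx
  · have hmono : MonotoneOn W (Icc 0 x) :=
      monotoneOn_of_hasDerivWithinAt_nonneg (convex_Icc 0 x) hW_cont.continuousOn
        (fun t _ => hW_within _ t) fun t ht => by
          rw [interior_Icc] at ht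
          have hmin := hU.min_le_of_mem_Icc self_mem_Ici (mem_Ici.2 hx) (Ioo_subset_Icc_self ht)
          rw [hU0, min_eq_left hUx] at hmin
          exact mul_nonneg (hg t) hmin
    simpa [hW0] using hmono (left_mem_Icc.2 hx) (right_mem_Icc.2 hx) hx
  · have hanti : AntitoneOn W (Ici x) :=
      antitoneOn_of_hasDerivWithinAt_nonpos (convex_Ici x) hW_cont.continuousOn
        (fun t _ => hW_within _ t) fun t ht => by
          rw [interior_Ici] at ht
          have hmin := hU.min_le_of_mem_Icc self_mem_Ici (mem_Ici.2 (hx.trans ht.le)) ⟨hx, ht.le⟩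
          rw [hU0] at hmin
          have hUt : U t < 0 := by simpa using (hmin.trans_lt hUx)
          exact mul_nonpos_of_nonneg_of_nonpos (hg t) hUt.le
    exact le_of_tendsto hW_lim (eventually_atTop.2 ⟨x, fun t ht => hanti self_mem_Ici ht ht⟩)

lemma integrable_exp_neg_sq_div_two : Integrable fun u : ℝ => exp (-u ^ 2 / 2) := by
  simpa [neg_div, div_eq_inv_mul] using integrable_exp_neg_mul_sq (b := 1 / 2) (by norm_num)

lemma integral_exp_neg_sq_div_two : ∫ u : ℝ, exp (-u ^ 2 / 2) = √(2 * π) := by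
  simpa [neg_div, div_eq_inv_mul, mul_comm] using integral_gaussian (1 / 2)

lemma hasDerivAt_exp_neg_sq_div_two (t : ℝ) :
    HasDerivAt (fun u : ℝ => exp (-u ^ 2 / 2)) (-t * exp (-t ^ 2 / 2)) t := by
  have h : HasDerivAt (fun u : ℝ => -u ^ 2 / 2) (-t) t :=
    (((hasDerivAt_pow 2 t).neg).div_const 2).congr_deriv (by push_cast; ring)
  simpa [mul_comm] using h.exp

lemma tendsto_exp_neg_sq_div_two_atTop : Tendsto (fun t : ℝ => exp (-t ^ 2 / 2)) atTop (𝓝 0) :=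
  tendsto_exp_atBot.comp <|
    (tendsto_neg_atTop_atBot.comp (tendsto_pow_atTop two_ne_zero)).atBot_div_const two_pos

lemma sqrt_two_mul_pi_pos : 0 < √(2 * π) := by positivity

lemma setIntegral_exp_neg_sq_div_two_pos {s : Set ℝ} (hs : volume s ≠ 0) :
    0 < ∫ u in s, exp (-u ^ 2 / 2) :=
  haveI : NeZero (volume.restrict s) := ⟨Measure.restrict_eq_zero.not.2 hs⟩
  integral_exp_pos integrable_exp_neg_sq_div_two.integrableOn

lemma one_sub_stdPhi (x : ℝ) : 1 - stdPhi x = (√(2 * π))⁻¹ * ∫ u in Ioi x, exp (-u ^ 2 / 2) := by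
  have hsplit := intervalIntegral.integral_Iic_add_Ioi (b := x)
    integrable_exp_neg_sq_div_two.integrableOn integrable_exp_neg_sq_div_two.integrableOn
  rw [integral_exp_neg_sq_div_two] at hsplit
  rw [stdPhi, ← inv_mul_cancel₀ sqrt_two_mul_pi_pos.ne', ← hsplit]
  ring

lemma stdPhi_pos (x : ℝ) : 0 < stdPhi x :=
  mul_pos (inv_pos.2 sqrt_two_mul_pi_pos) (setIntegral_exp_neg_sq_div_two_pos (by simp))

lemma stdPhi_lt_one (x : ℝ) : stdPhi x < 1 :=
  sub_pos.1 <| (one_sub_stdPhi x).symm ▸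
    mul_pos (inv_pos.2 sqrt_two_mul_pi_pos) (setIntegral_exp_neg_sq_div_two_pos (by simp))

lemma stdPhi_mono : Monotone stdPhi := fun _ _ hab =>
  mul_le_mul_of_nonneg_left
    (setIntegral_mono_set integrable_exp_neg_sq_div_two.integrableOn
      (Eventually.of_forall fun _ => (exp_pos _).le) (Eventually.of_forall (Iic_subset_Iic.2 hab)))
    (inv_pos.2 sqrt_two_mul_pi_pos).le

lemma stdPhi_neg (x : ℝ) : stdPhi (-x) = 1 - stdPhi x := by
  have hreflect := integral_comp_neg_Iic (-x) fun u : ℝ => exp (-u ^ 2 / 2)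
  simp only [neg_sq, neg_neg] at hreflect
  rw [one_sub_stdPhi, stdPhi, hreflect]

lemma stdPhi_zero : stdPhi 0 = 1 / 2 := by
  have h := stdPhi_neg 0
  rw [neg_zero] at h
  linarith

lemma hasDerivAt_stdPhi (x : ℝ) : HasDerivAt stdPhi ((√(2 * π))⁻¹ * exp (-x ^ 2 / 2)) x := by
  have hcont : Continuous fun u : ℝ => exp (-u ^ 2 / 2) := by fun_prop
  have hPhi : stdPhi = fun y => stdPhi 0 + (√(2 * π))⁻¹ * ∫ u in (0 : ℝ)..y, exp (-u ^ 2 / 2) := by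
    funext y
    rw [← intervalIntegral.integral_Iic_sub_Iic integrable_exp_neg_sq_div_two.integrableOn
      integrable_exp_neg_sq_div_two.integrableOn, stdPhi, stdPhi]
    ring
  rw [hPhi]
  exact (((hcont.integral_hasStrictDerivAt 0 x).hasDerivAt).const_mul _).const_add _

lemma tendsto_stdPhi_atTop : Tendsto stdPhi atTop (𝓝 1) := by
  have h : Tendsto (fun x => 1 - stdPhi x) atTop (𝓝 0) := by
    simp_rw [one_sub_stdPhi]
    simpa using (tendsto_integral_Ioi_zero tendsto_id).const_mul (√(2 * π))⁻¹
  simpa using h.const_sub 1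

lemma concaveOn_stdPhi_sub_linear :
    ConcaveOn ℝ (Ici 0) fun t => (√(2 * π))⁻¹ * (2 * stdPhi t - 1) - t / 4 := by
  have hderiv : ∀ t, HasDerivAt (fun t => (√(2 * π))⁻¹ * (2 * stdPhi t - 1) - t / 4)
      ((√(2 * π))⁻¹ * (2 * ((√(2 * π))⁻¹ * exp (-t ^ 2 / 2))) - 1 / 4) t := fun t =>
    ((((hasDerivAt_stdPhi t).const_mul 2).sub_const 1).const_mul _).sub
      ((hasDerivAt_id t).div_const 4)
  refine AntitoneOn.concaveOn_of_deriv (convex_Ici 0)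
    (fun t _ => (hderiv t).continuousAt.continuousWithinAt)
    (fun t _ => (hderiv t).differentiableAt.differentiableWithinAt) ?_
  rw [interior_Ici]
  intro a ha b hb hab
  rw [(hderiv a).deriv, (hderiv b).deriv]
  have hexp : exp (-b ^ 2 / 2) ≤ exp (-a ^ 2 / 2) :=
    exp_le_exp.2 (by nlinarith [mem_Ioi.1 ha])
  gcongr

lemma hasDerivAt_exp_div_four_sub_stdPhi_mul (t : ℝ) :
    HasDerivAt (fun t => exp (-t ^ 2 / 2) / 4 - stdPhi t * (1 - stdPhi t))
      (exp (-t ^ 2 / 2) * ((√(2 * π))⁻¹ * (2 * stdPhi t - 1) - t / 4)) t :=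
  (((hasDerivAt_exp_neg_sq_div_two t).div_const 4).sub
    ((hasDerivAt_stdPhi t).mul ((hasDerivAt_stdPhi t).const_sub 1))).congr_deriv (by ring)

lemma stdPhi_mul_one_sub_le_of_nonneg {x : ℝ} (hx : 0 ≤ x) :
    stdPhi x * (1 - stdPhi x) ≤ exp (-x ^ 2 / 2) / 4 := by
  have hlim : Tendsto (fun t => exp (-t ^ 2 / 2) / 4 - stdPhi t * (1 - stdPhi t)) atTop (𝓝 0) := by
    simpa using (tendsto_exp_neg_sq_div_two_atTop.div_const 4).sub (tendsto_stdPhi_atTop.mul (tendsto_stdPhi_atTop.const_sub 1))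
  have h := nonneg_of_hasDerivAt_mul_of_concaveOn concaveOn_stdPhi_sub_linear
    (by simp [stdPhi_zero]) hasDerivAt_exp_div_four_sub_stdPhi_mul (fun t => (exp_pos _).le)
    (by norm_num [stdPhi_zero]) hlim hx
  linarith

lemma stdPhi_mul_one_sub_le (x : ℝ) : stdPhi x * (1 - stdPhi x) ≤ exp (-x ^ 2 / 2) / 4 := by
  rcases le_total 0 x with hx | hx
  · exact stdPhi_mul_one_sub_le_of_nonneg hx
  · have h := stdPhi_mul_one_sub_le_of_nonneg (neg_nonneg.2 hx)
    rw [stdPhi_neg, neg_sq] at h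
    linarith

lemma steinF_pos (z x : ℝ) : 0 < steinF z x := by
  unfold steinF
  split_ifs
  · exact mul_pos (mul_pos (by positivity) (stdPhi_pos x)) (sub_pos.2 (stdPhi_lt_one z))
  · exact mul_pos (mul_pos (by positivity) (sub_pos.2 (stdPhi_lt_one x))) (stdPhi_pos z)

lemma steinF_le_mul_stdPhi_mul_one_sub (z x : ℝ) :
    steinF z x ≤ √(2 * π) * exp (x ^ 2 / 2) * (stdPhi x * (1 - stdPhi x)) := by
  unfold steinF
  split_ifs with hxz
  · rw [mul_assoc _ (stdPhi x)]
    gcongr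
    · exact (stdPhi_pos x).le
    · exact stdPhi_mono hxz
  · rw [mul_assoc _ (1 - stdPhi x), mul_comm (stdPhi x)]
    gcongr
    · linarith [stdPhi_lt_one x]
    · exact stdPhi_mono (not_le.1 hxz).le

theorem steinF_global_bound (z x : ℝ) :
    0 < steinF z x ∧ steinF z x ≤ Real.sqrt (2 * Real.pi) / 4 := by
  refine ⟨steinF_pos z x, (steinF_le_mul_stdPhi_mul_one_sub z x).trans ?_⟩
  calc √(2 * π) * exp (x ^ 2 / 2) * (stdPhi x * (1 - stdPhi x))
      ≤ √(2 * π) * exp (x ^ 2 / 2) * (exp (-x ^ 2 / 2) / 4) := by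
        gcongr; exact stdPhi_mul_one_sub_le x
    _ = √(2 * π) / 4 := by
        rw [neg_div, exp_neg]; field_simp
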